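/- Let Ω be a commutative semigroup and (D, (≺_α)_{α∈Ω}, (≻_α)_{α∈Ω}) a dendriform family algebra. Define x ∘_α y := x ≻_α y − y ≺_α x. Then (D, (∘_α)) is a pre-Lie family algebra: (x∘_α y)∘_{αβ} z − x∘_α(y∘_β z) = (y∘_β x)∘_{βα} z − y∘_β(x∘_α z) for all x,y,z∈D and α,β∈Ω. -/
import Mathlib


/-- `x ∘_α y = x ≻_α y − y ≺_α x` for family operations. -/
def dendFamCirc {k Ω D : Type*} [Field k] [AddCommGroup D] [Module k D]
    (pre post : Ω → D →ₗ[k] D →ₗ[k] D) (α : Ω) (x y : D) : D :=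
  post α x y - pre α y x

/-- A dendriform family algebra gives a pre-Lie family algebra via
`x ∘_α y = x ≻_α y − y ≺_α x`. -/
theorem dendriformFamily_preLieFamily
    {k Ω D : Type*} [Field k] [CommSemigroup Ω] [AddCommGroup D] [Module k D]
    (pre post : Ω → D →ₗ[k] D →ₗ[k] D)
    (h1 : ∀ (α β : Ω) (x y z : D),
      pre β (pre α x y) z = pre (α * β) x (pre β y z + post α y z))
    (h2 : ∀ (α β : Ω) (x y z : D),
      pre β (post α x y) z = post α x (pre β y z))
    (h3 : ∀ (α β : Ω) (x y z : D),
      post (α * β) (pre β x y + post α x y) z = post α x (post β y z)) :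
    ∀ (α β : Ω) (x y z : D),
      dendFamCirc pre post (α * β) (dendFamCirc pre post α x y) z
        - dendFamCirc pre post α x (dendFamCirc pre post β y z)
      = dendFamCirc pre post (β * α) (dendFamCirc pre post β y x) z
        - dendFamCirc pre post β y (dendFamCirc pre post α x z) := by
  intro α β x y z
  have e1 := h3 α β x y z
  have e2 := h3 β α y x z
  have e3 := h1 α β z x y
  have e4 := h1 β α z y x
  have e5 := h2 α β x z y
  have e6 := h2 β α y z x
  simp only [dendFamCirc, map_add, map_sub, LinearMap.add_apply, LinearMap.sub_apply,
    mul_comm β α] at *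
  linear_combination (norm := abel) e1 - e2 + e3 - e4 - e5 + e6
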